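/- arXiv:0803.1746 — 8 statements merged into one kernel-verified Lean document; each statement's English description precedes it below -/
import Mathlib

section
/- Let G and G* be finite groups with Sylow p-subgroups S ≤ G and S* ≤ G*. If φ : S ≅ S* is a fusion preserving isomorphism (i.e., for all subgroups P, Q ≤ S and all group homomorphisms α : P → Q, α is induced by conjugation by an element of G if and only if φ ∘ α ∘ φ⁻¹ : φ(P) → φ(Q) is induced by conjugation by an element of G*), then for every finite p-group R there is a bijection between the set of G-conjugacy classes of homomorphisms R → G and the set of G*-conjugacy classes of homomorphisms R → G*. -/
/-- The conjugacy setoid on homomorphisms `R →* G`: two homomorphisms are equivalent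
if they differ by conjugation by an element of `G`. -/
def repSetoid (R G : Type*) [Group R] [Group G] : Setoid (R →* G) where
  r α β := ∃ g : G, ∀ x : R, β x = g * α x * g⁻¹
  iseqv := by
    constructor
    · intro α; exact ⟨1, fun x => by simp⟩
    · rintro α β ⟨g, hg⟩
      exact ⟨g⁻¹, fun x => by rw [hg x]; group⟩
    · rintro α β γ ⟨g, hg⟩ ⟨h, hh⟩
      exact ⟨h * g, fun x => by rw [hh x, hg x]; group⟩

/-- `ConjRep R G` is the set of homomorphisms `R →* G` modulo conjugation in `G`. -/
def ConjRep (R G : Type*) [Group R] [Group G] : Type _ :=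
  Quotient (repSetoid R G)

/-- The class of a homomorphism in `ConjRep R G`. -/
def ConjRep.mk {R G : Type*} [Group R] [Group G] (α : R →* G) : ConjRep R G :=
  Quotient.mk (repSetoid R G) α

/-- An isomorphism `φ : S ≃* S*` between a Sylow `p`-subgroup `S ≤ G` and a Sylow
`p`-subgroup `S* ≤ G*` is fusion preserving if for all `P, Q ≤ S` and all homomorphisms
`α : P → Q`, `α` is induced by conjugation in `G` iff `φ ∘ α ∘ φ⁻¹` is induced by
conjugation in `G*`. -/
def IsFusionPreserving {G G' : Type*} [Group G] [Group G'] (S : Subgroup G) (S' : Subgroup G')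
    (φ : S ≃* S') : Prop :=
  ∀ (P Q : Subgroup G) (hP : P ≤ S) (hQ : Q ≤ S), ∀ α : P →* Q,
    (∃ g : G, ∀ x : P, (α x : G) = g * (x : G) * g⁻¹) ↔
    (∃ g' : G', ∀ x : P,
      (φ ⟨(α x : G), hQ (α x).2⟩ : G') = g' * (φ ⟨(x : G), hP x.2⟩ : G') * g'⁻¹)

/-!
Every homomorphism from a `p`-group into `G` is conjugate into the Sylow subgroup `S`, so
`Rep(R, G)` is the set of homomorphisms `R → S` modulo `G`-conjugacy, and likewise for `G*`.
Composition with `φ` identifies `R → S` with `R → S*`, and it respects the two conjugacy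
relations: `α, β : R → S` are `G`-conjugate iff the homomorphism `α r ↦ β r` between their
images is induced by `G`, which by fusion preservation happens iff `φ ∘ α` and `φ ∘ β` are
`G*`-conjugate.
-/

variable {R G G' : Type*} [Group R] [Group G] [Group G']

theorem ker_le_ker_of_repSetoid {α β : R →* G} (h : repSetoid R G α β) : α.ker ≤ β.ker := by
  obtain ⟨g, hg⟩ := h
  intro r hr
  rw [MonoidHom.mem_ker] at hr ⊢
  rw [hg, hr, mul_one, mul_inv_cancel]

theorem exists_conj_mem_sylow {p : ℕ} [Fact p.Prime] [Finite G] (P : Sylow p G)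
    (hR : IsPGroup p R) (α : R →* G) : ∃ g : G, ∀ r, g * α r * g⁻¹ ∈ P := by
  obtain ⟨T, hT⟩ := ((hR.to_subgroup ⊤).map α).exists_le_sylow
  obtain ⟨g, rfl⟩ := MulAction.exists_smul_eq G T P
  refine ⟨g, fun r => ?_⟩
  rw [← SetLike.mem_coe, ← Sylow.coe_coe, Sylow.coe_subgroup_smul]
  exact Subgroup.smul_mem_pointwise_smul _ (MulAut.conj g) _ (hT ⟨r, trivial, rfl⟩)

theorem conjRep_mk_subtype_comp_surjective {p : ℕ} [Fact p.Prime] [Finite G] (P : Sylow p G)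
    (hR : IsPGroup p R) :
    Function.Surjective fun β : R →* P => ConjRep.mk ((P : Subgroup G).subtype.comp β) := by
  rintro ⟨α⟩
  obtain ⟨g, hg⟩ := exists_conj_mem_sylow P hR α
  exact ⟨((MulAut.conj g).toMonoidHom.comp α).codRestrict _ hg,
    Quotient.sound ((repSetoid R G).symm ⟨g, fun _ => rfl⟩)⟩

noncomputable def conjRepEquivOfSylow {p : ℕ} [Fact p.Prime] [Finite G] (P : Sylow p G)
    (hR : IsPGroup p R) :
    Quotient ((repSetoid R G).comap ((P : Subgroup G).subtype.comp ·)) ≃ ConjRep R G :=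
  (Setoid.comapQuotientEquiv _ _).trans
    (Equiv.subtypeUnivEquiv (conjRep_mk_subtype_comp_surjective P hR))

theorem IsFusionPreserving.repSetoid_comp_iff_of_ker_le {S : Subgroup G} {S' : Subgroup G'}
    {φ : S ≃* S'} (hφ : IsFusionPreserving S S' φ) {α β : R →* S} (hker : α.ker ≤ β.ker) :
    repSetoid R G (S.subtype.comp α) (S.subtype.comp β) ↔
      repSetoid R G' (S'.subtype.comp (φ.toMonoidHom.comp α))
        (S'.subtype.comp (φ.toMonoidHom.comp β)) := by
  set a := S.subtype.comp α
  set b := S.subtype.comp β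
  have hP : a.range ≤ S := by rintro _ ⟨r, rfl⟩; exact (α r).2
  have hQ : b.range ≤ S := by rintro _ ⟨r, rfl⟩; exact (β r).2
  have hab : a.rangeRestrict.ker ≤ b.rangeRestrict.ker := by
    simpa only [a, b, MonoidHom.ker_rangeRestrict,
      MonoidHom.ker_comp_of_injective _ _ S.subtype_injective] using hker
  -- `c` is `α r ↦ β r`, well defined since `ker α ≤ ker β`
  let c : a.range →* b.range :=
    a.rangeRestrict.liftOfSurjective a.rangeRestrict_surjective ⟨b.rangeRestrict, hab⟩
  have hc : ∀ r, c (a.rangeRestrict r) = b.rangeRestrict r := fun r =>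
    a.rangeRestrict.liftOfRightInverse_comp_apply _ _ ⟨b.rangeRestrict, hab⟩ r
  have fusion_c := hφ a.range b.range hP hQ c
  simp only [a.rangeRestrict_surjective.forall, hc] at fusion_c
  exact fusion_c

theorem IsFusionPreserving.repSetoid_comp_iff {S : Subgroup G} {S' : Subgroup G'}
    {φ : S ≃* S'} (hφ : IsFusionPreserving S S' φ) (α β : R →* S) :
    repSetoid R G (S.subtype.comp α) (S.subtype.comp β) ↔
      repSetoid R G' (S'.subtype.comp (φ.toMonoidHom.comp α))
        (S'.subtype.comp (φ.toMonoidHom.comp β)) := by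
  have ker_comp : ∀ γ : R →* S, (S.subtype.comp γ).ker = γ.ker := fun γ =>
    MonoidHom.ker_comp_of_injective _ _ S.subtype_injective
  have ker_comp' : ∀ γ : R →* S, (S'.subtype.comp (φ.toMonoidHom.comp γ)).ker = γ.ker :=
    fun γ => by rw [MonoidHom.ker_comp_of_injective _ _ S'.subtype_injective,
      MonoidHom.ker_comp_of_injective _ _ φ.injective]
  constructor
  · intro h
    refine (hφ.repSetoid_comp_iff_of_ker_le ?_).mp h
    simpa only [ker_comp] using ker_le_ker_of_repSetoid h
  · intro h
    refine (hφ.repSetoid_comp_iff_of_ker_le ?_).mpr h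
    simpa only [ker_comp'] using ker_le_ker_of_repSetoid h

/-- A fusion preserving isomorphism between Sylow `p`-subgroups of finite groups `G` and `G*`
induces, for every finite `p`-group `R`, a bijection between `G`-conjugacy classes of
homomorphisms `R → G` and `G*`-conjugacy classes of homomorphisms `R → G*`. -/
theorem stmt0 (p : ℕ) [Fact p.Prime] (G G' : Type) [Group G] [Finite G] [Group G'] [Finite G']
    (S : Sylow p G) (S' : Sylow p G')
    (φ : (S : Subgroup G) ≃* (S' : Subgroup G'))
    (hφ : IsFusionPreserving (S : Subgroup G) (S' : Subgroup G') φ) :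
    ∀ (R : Type) [Group R] [Finite R], IsPGroup p R → Nonempty (ConjRep R G ≃ ConjRep R G') := by
  intro R _ _ hR
  exact ⟨(conjRepEquivOfSylow S hR).symm.trans <|
    (Quotient.congr φ.monoidHomCongrRightEquiv hφ.repSetoid_comp_iff).trans
      (conjRepEquivOfSylow S' hR)⟩
end

section
/- Let G and G* be finite groups and p a prime. Suppose that for every finite p-group Q there is a bijection Φ_Q : Rep(Q,G) → Rep(Q,G*) which is natural in Q (with respect to all group homomorphisms between finite p-groups). Then Φ preserves injectivity: a class [α] ∈ Rep(Q,G) contains an injective homomorphism if and only if Φ_Q([α]) contains an injective homomorphism. -/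
/-
A natural transformation of `Rep(-, G)` cannot enlarge kernels: `α` factors through
`Q ⧸ ker α`, so by naturality `Φ [α]` is represented by a map factoring through `Q ⧸ ker α` too.
The inverse of a natural family of bijections is again natural, so for bijections the kernel of
`Φ [α]` equals that of `α`, and a class contains an injective homomorphism iff its kernel is `⊥`.
-/

theorem MonoidHom.ker_conj_eq {R H : Type*} [Group R] [Group H] {a b : R →* H} {g : H}
    (h : ∀ x, b x = g * a x * g⁻¹) : b.ker = a.ker := by
  ext x
  simp only [MonoidHom.mem_ker, h, conj_eq_one_iff]

namespace ConjRep

variable {R H : Type*} [Group R] [Group H]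

theorem exists_mk (c : ConjRep R H) : ∃ α : R →* H, mk α = c :=
  Quotient.exists_rep c

def ker : ConjRep R H → Subgroup R :=
  Quotient.lift (s := repSetoid R H) MonoidHom.ker fun _ _ ⟨_, h⟩ =>
    (MonoidHom.ker_conj_eq h).symm

@[simp]
theorem ker_mk (α : R →* H) : ker (mk α) = α.ker :=
  rfl

theorem exists_mk_injective_iff (c : ConjRep R H) :
    (∃ β : R →* H, c = mk β ∧ Function.Injective β) ↔ c.ker = ⊥ := by
  constructor
  · rintro ⟨β, rfl, hβ⟩
    exact (MonoidHom.ker_eq_bot_iff β).2 hβ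
  · intro h
    obtain ⟨β, rfl⟩ := c.exists_mk
    exact ⟨β, rfl, (MonoidHom.ker_eq_bot_iff β).1 h⟩

end ConjRep

def IsNaturalOnPGroups (p : ℕ) {G G' : Type*} [Group G] [Group G']
    (Φ : ∀ (Q : Type) [Group Q] [Finite Q], IsPGroup p Q → ConjRep Q G → ConjRep Q G') : Prop :=
  ∀ (Q Q' : Type) [Group Q] [Finite Q] [Group Q'] [Finite Q']
    (hQ : IsPGroup p Q) (hQ' : IsPGroup p Q') (f : Q' →* Q) (α : Q →* G) (β : Q →* G'),
    Φ Q hQ (ConjRep.mk α) = ConjRep.mk β →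
    Φ Q' hQ' (ConjRep.mk (α.comp f)) = ConjRep.mk (β.comp f)

namespace IsNaturalOnPGroups

variable {p : ℕ} {G G' : Type*} [Group G] [Group G']

theorem ker_le_ker
    {Φ : ∀ (Q : Type) [Group Q] [Finite Q], IsPGroup p Q → ConjRep Q G → ConjRep Q G'}
    (hΦ : IsNaturalOnPGroups p Φ) {Q : Type} [Group Q] [Finite Q] (hQ : IsPGroup p Q)
    (c : ConjRep Q G) : c.ker ≤ (Φ Q hQ c).ker := by
  obtain ⟨α, rfl⟩ := c.exists_mk
  let K := α.ker
  have hQK : IsPGroup p (Q ⧸ K) := hQ.to_quotient K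
  obtain ⟨δ, hδ⟩ := (Φ (Q ⧸ K) hQK (ConjRep.mk (QuotientGroup.kerLift α))).exists_mk
  have hfactor : (QuotientGroup.kerLift α).comp (QuotientGroup.mk' K) = α :=
    MonoidHom.ext fun _ => rfl
  have hΦα : Φ Q hQ (ConjRep.mk α) = ConjRep.mk (δ.comp (QuotientGroup.mk' K)) := by
    rw [← hΦ _ _ hQK hQ (QuotientGroup.mk' K) _ _ hδ.symm, hfactor]
  rw [hΦα, ConjRep.ker_mk, ConjRep.ker_mk, ← MonoidHom.comap_ker]
  simpa only [QuotientGroup.ker_mk'] using (QuotientGroup.mk' K).ker_le_comap δ.ker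

theorem symm
    {Φ : ∀ (Q : Type) [Group Q] [Finite Q], IsPGroup p Q → ConjRep Q G ≃ ConjRep Q G'}
    (hΦ : IsNaturalOnPGroups p fun Q _ _ hQ => Φ Q hQ) :
    IsNaturalOnPGroups p fun Q _ _ hQ => (Φ Q hQ).symm := by
  intro Q Q' _ _ _ _ hQ hQ' f α β h
  rw [Equiv.symm_apply_eq] at h ⊢
  exact (hΦ Q Q' hQ hQ' f β α h.symm).symm

theorem ker_apply
    {Φ : ∀ (Q : Type) [Group Q] [Finite Q], IsPGroup p Q → ConjRep Q G ≃ ConjRep Q G'}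
    (hΦ : IsNaturalOnPGroups p fun Q _ _ hQ => Φ Q hQ) {Q : Type} [Group Q] [Finite Q]
    (hQ : IsPGroup p Q) (c : ConjRep Q G) : (Φ Q hQ c).ker = c.ker := by
  refine le_antisymm ?_ (hΦ.ker_le_ker hQ c)
  simpa only [Equiv.symm_apply_apply] using hΦ.symm.ker_le_ker hQ (Φ Q hQ c)

end IsNaturalOnPGroups

theorem stmt1_general (p : ℕ) (G G' : Type) [Group G] [Group G']
    (Φ : ∀ (Q : Type) [Group Q] [Finite Q], IsPGroup p Q → (ConjRep Q G ≃ ConjRep Q G'))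
    (hnat : ∀ (Q Q' : Type) [Group Q] [Finite Q] [Group Q'] [Finite Q']
      (hQ : IsPGroup p Q) (hQ' : IsPGroup p Q') (f : Q' →* Q) (α : Q →* G) (β : Q →* G'),
        Φ Q hQ (ConjRep.mk α) = ConjRep.mk β →
        Φ Q' hQ' (ConjRep.mk (α.comp f)) = ConjRep.mk (β.comp f)) :
    ∀ (Q : Type) [Group Q] [Finite Q] (hQ : IsPGroup p Q) (α : Q →* G),
      Function.Injective α ↔
        ∃ β : Q →* G', Φ Q hQ (ConjRep.mk α) = ConjRep.mk β ∧ Function.Injective β := by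
  intro Q _ _ hQ α
  have hΦ : IsNaturalOnPGroups p fun Q _ _ hQ => Φ Q hQ := hnat
  rw [ConjRep.exists_mk_injective_iff, hΦ.ker_apply, ConjRep.ker_mk, MonoidHom.ker_eq_bot_iff]

/-- A family of bijections `Rep(Q,G) ≃ Rep(Q,G*)`, natural in the finite `p`-group `Q`,
preserves injectivity: a conjugacy class contains an injective homomorphism if and only if
its image class does. -/
theorem stmt1 (p : ℕ) [Fact p.Prime] (G G' : Type) [Group G] [Finite G] [Group G'] [Finite G']
    (Φ : ∀ (Q : Type) [Group Q] [Finite Q], IsPGroup p Q → (ConjRep Q G ≃ ConjRep Q G'))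
    (hnat : ∀ (Q Q' : Type) [Group Q] [Finite Q] [Group Q'] [Finite Q']
      (hQ : IsPGroup p Q) (hQ' : IsPGroup p Q') (f : Q' →* Q) (α : Q →* G) (β : Q →* G'),
        Φ Q hQ (ConjRep.mk α) = ConjRep.mk β →
        Φ Q' hQ' (ConjRep.mk (α.comp f)) = ConjRep.mk (β.comp f)) :
    ∀ (Q : Type) [Group Q] [Finite Q] (hQ : IsPGroup p Q) (α : Q →* G),
      Function.Injective α ↔
        ∃ β : Q →* G', Φ Q hQ (ConjRep.mk α) = ConjRep.mk β ∧ Function.Injective β :=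
  stmt1_general p G G' Φ hnat
end

section
/- Let G and G* be finite groups and p a prime. Suppose that for every finite p-group Q there is a bijection Φ_Q : Rep(Q,G) → Rep(Q,G*) natural in Q. Then any Sylow p-subgroup of G is isomorphic (as a group) to any Sylow p-subgroup of G*. -/
/-- If there are bijections `Rep(Q,G) ≃ Rep(Q,G*)`, natural in the finite `p`-group `Q`,
then a Sylow `p`-subgroup of `G` is isomorphic to a Sylow `p`-subgroup of `G*`. -/
theorem stmt2 (p : ℕ) [Fact p.Prime] (G G' : Type) [Group G] [Finite G] [Group G'] [Finite G']
    (Φ : ∀ (Q : Type) [Group Q] [Finite Q], IsPGroup p Q → (ConjRep Q G ≃ ConjRep Q G'))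
    (hnat : ∀ (Q Q' : Type) [Group Q] [Finite Q] [Group Q'] [Finite Q']
      (hQ : IsPGroup p Q) (hQ' : IsPGroup p Q') (f : Q' →* Q) (α : Q →* G) (β : Q →* G'),
        Φ Q hQ (ConjRep.mk α) = ConjRep.mk β →
        Φ Q' hQ' (ConjRep.mk (α.comp f)) = ConjRep.mk (β.comp f)) :
    ∀ (S : Sylow p G) (S' : Sylow p G'),
      Nonempty ((S : Subgroup G) ≃* (S' : Subgroup G')) := by
  classical
  -- The trivial class is sent to the trivial class.
  have htriv : ∀ (Q : Type) [Group Q] [Finite Q] (hQ : IsPGroup p Q),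
      Φ Q hQ (ConjRep.mk 1) = ConjRep.mk (1 : Q →* G') := by
    intro Q _ _ hQ
    have hpu : IsPGroup p PUnit := IsPGroup.of_card (n := 0) (by simp)
    have hsub : ∀ a b : ConjRep PUnit G', a = b := by
      intro a b
      induction a using Quotient.ind
      induction b using Quotient.ind
      exact congrArg _ (Subsingleton.elim _ _)
    have h1 : Φ PUnit hpu (ConjRep.mk (1 : PUnit →* G)) = ConjRep.mk (1 : PUnit →* G') :=
      hsub _ _
    have h2 := hnat PUnit Q hpu hQ (1 : Q →* PUnit) 1 1 h1
    simpa using h2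
  -- Kernels are preserved.
  have hker : ∀ (Q : Type) [Group Q] [Finite Q] (hQ : IsPGroup p Q) (α : Q →* G) (β : Q →* G'),
      Φ Q hQ (ConjRep.mk α) = ConjRep.mk β → ∀ x : Q, (α x = 1 ↔ β x = 1) := by
    intro Q _ _ hQ α β h x
    set K := Subgroup.zpowers x with hKdef
    have hKp : IsPGroup p K := hQ.to_subgroup K
    have hx : x ∈ K := Subgroup.mem_zpowers x
    constructor
    · intro hα
      have hcomp : α.comp K.subtype = 1 := by
        ext y
        obtain ⟨n, hn⟩ := Subgroup.mem_zpowers_iff.mp y.2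
        simp only [MonoidHom.comp_apply, MonoidHom.one_apply, Subgroup.coe_subtype]
        rw [← hn]
        simp [hα]
      have h2 := hnat Q K hQ hKp K.subtype α β h
      rw [hcomp, htriv K hKp] at h2
      obtain ⟨g, hg⟩ := Quotient.exact h2
      have h3 := hg ⟨x, hx⟩
      simpa using h3
    · intro hβ
      have hcomp : β.comp K.subtype = 1 := by
        ext y
        obtain ⟨n, hn⟩ := Subgroup.mem_zpowers_iff.mp y.2
        simp only [MonoidHom.comp_apply, MonoidHom.one_apply, Subgroup.coe_subtype]
        rw [← hn]
        simp [hβ]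
      have h2 := hnat Q K hQ hKp K.subtype α β h
      rw [hcomp] at h2
      have h3 : ConjRep.mk (α.comp K.subtype) = ConjRep.mk (1 : ↥K →* G) :=
        (Φ K hKp).injective (h2.trans (htriv K hKp).symm)
      obtain ⟨g, hg⟩ := Quotient.exact h3
      have h4 : (1 : G) = g * α x * g⁻¹ := by simpa using hg ⟨x, hx⟩
      calc α x = g⁻¹ * (g * α x * g⁻¹) * g := by group
    _ = g⁻¹ * 1 * g := by rw [← h4]
    _ = 1 := by group
  -- Finiteness of Sylow sets.
  haveI : Finite (Subgroup G) := inferInstance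
  haveI : Finite (Sylow p G) := Finite.of_injective Sylow.toSubgroup
    (fun a b hab => Sylow.ext hab)
  haveI : Finite (Sylow p G') := Finite.of_injective Sylow.toSubgroup
    (fun a b hab => Sylow.ext hab)
  -- Given a Sylow S of G, produce an injective hom S →* G'.
  have fwd : ∀ S : Sylow p G, ∃ β : ↥(S : Subgroup G) →* G', Function.Injective β := by
    intro S
    obtain ⟨β, hβ⟩ := Quotient.exists_rep
      (Φ ↥(S : Subgroup G) S.2 (ConjRep.mk (S : Subgroup G).subtype))
    have hβ' : Φ ↥(S : Subgroup G) S.2 (ConjRep.mk (S : Subgroup G).subtype) = ConjRep.mk β :=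
      hβ.symm
    refine ⟨β, fun a b hab => ?_⟩
    have h1 : β (a * b⁻¹) = 1 := by simp [hab]
    have h2 := (hker ↥(S : Subgroup G) S.2 _ β hβ' (a * b⁻¹)).mpr h1
    have h3 : ((a * b⁻¹ : ↥(S : Subgroup G)) : G) = 1 := h2
    have h4 : a * b⁻¹ = 1 := Subtype.coe_injective (by simpa using h3)
    exact mul_inv_eq_one.mp h4
  -- Given a Sylow S' of G', produce an injective hom S' →* G.
  have bwd : ∀ S' : Sylow p G', ∃ γ : ↥(S' : Subgroup G') →* G, Function.Injective γ := by
    intro S'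
    obtain ⟨γ, hγ⟩ := Quotient.exists_rep
      ((Φ ↥(S' : Subgroup G') S'.2).symm (ConjRep.mk (S' : Subgroup G').subtype))
    have hγ' : Φ ↥(S' : Subgroup G') S'.2 (ConjRep.mk γ) =
        ConjRep.mk (S' : Subgroup G').subtype := by
      have h0 := congrArg (Φ ↥(S' : Subgroup G') S'.2) hγ
      rw [Equiv.apply_symm_apply] at h0
      exact h0
    refine ⟨γ, fun a b hab => ?_⟩
    have h1 : γ (a * b⁻¹) = 1 := by simp [hab]
    have h2 := (hker ↥(S' : Subgroup G') S'.2 γ _ hγ' (a * b⁻¹)).mp h1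
    have h3 : ((a * b⁻¹ : ↥(S' : Subgroup G')) : G') = 1 := h2
    have h4 : a * b⁻¹ = 1 := Subtype.coe_injective (by simpa using h3)
    exact mul_inv_eq_one.mp h4
  intro S S'
  obtain ⟨β, hβinj⟩ := fwd S
  obtain ⟨γ, hγinj⟩ := bwd S'
  -- range β is a p-subgroup of G', contained in some Sylow T.
  have hrangeβ : IsPGroup p β.range :=
    IsPGroup.of_surjective S.2 β.rangeRestrict β.rangeRestrict_surjective
  obtain ⟨T, hT⟩ := hrangeβ.exists_le_sylow
  have hrangeγ : IsPGroup p γ.range :=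
    IsPGroup.of_surjective S'.2 γ.rangeRestrict γ.rangeRestrict_surjective
  obtain ⟨T₂, hT₂⟩ := hrangeγ.exists_le_sylow
  -- Cardinality comparisons.
  have e1 : Nat.card ↥(S : Subgroup G) = Nat.card β.range :=
    Nat.card_congr (MonoidHom.ofInjective hβinj).toEquiv
  have e2 : Nat.card ↥(T : Subgroup G') = Nat.card ↥(S' : Subgroup G') :=
    Nat.card_congr (Sylow.equiv T S').toEquiv
  have e3 : Nat.card ↥(S' : Subgroup G') = Nat.card γ.range :=
    Nat.card_congr (MonoidHom.ofInjective hγinj).toEquiv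
  have e4 : Nat.card ↥(T₂ : Subgroup G) = Nat.card ↥(S : Subgroup G) :=
    Nat.card_congr (Sylow.equiv T₂ S).toEquiv
  have le1 : Nat.card β.range ≤ Nat.card ↥(T : Subgroup G') := Subgroup.card_le_of_le hT
  have le2 : Nat.card γ.range ≤ Nat.card ↥(T₂ : Subgroup G) := Subgroup.card_le_of_le hT₂
  have hcards : Nat.card ↥(S : Subgroup G) = Nat.card ↥(S' : Subgroup G') := by omega
  -- range β = T
  have hrT : β.range = (T : Subgroup G') :=
    Subgroup.eq_of_le_of_card_ge hT (by omega)
  exact ⟨(MonoidHom.ofInjective hβinj).trans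
    ((MulEquiv.subgroupCongr hrT).trans (Sylow.equiv T S'))⟩
end

section
/- Let G be a finite group, p a prime, and Z ≤ Z(G) a central subgroup of order prime to p. Then the quotient map G → G/Z induces, for every finite p-group P, a bijection Rep(P,G) → Rep(P,G/Z); in particular it restricts to an isomorphism from a Sylow p-subgroup S of G onto a Sylow p-subgroup of G/Z which is fusion preserving. -/
/-! Two homomorphisms `α β : P →* G` from a `p`-group that agree modulo the central subgroup `Z`
differ pointwise by central elements `z x = (α x)⁻¹ * β x ∈ Z`; since `α x` commutes with `z x`,
`z x ^ p ^ k = 1` whenever `x ^ p ^ k = 1`, so `z x = 1` as `|Z|` is prime to `p`. Applied to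
`β` and a conjugate of `α`, this makes `Rep(P,G) → Rep(P,G/Z)` injective, and, for subgroups of a
Sylow subgroup `S` (which meets `Z` trivially), gives fusion preservation. Surjectivity is
Schur–Zassenhaus: the preimage in `G` of the image of `β : P →* G ⧸ Z` is an extension of a
`p`-group by `Z`, hence splits, and a splitting lifts `β`. -/

open QuotientGroup

theorem Subgroup.eq_one_of_pow_eq_one_of_coprime_card {G : Type*} [Group G] {p : ℕ}
    {H : Subgroup G} (hH : (Nat.card H).Coprime p) {x : G} (hx : x ∈ H) {k : ℕ}
    (h : x ^ p ^ k = 1) : x = 1 :=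
  orderOf_eq_one_iff.mp <| Nat.eq_one_of_dvd_coprimes (hH.pow_right k)
    (H.orderOf_dvd_natCard hx) (orderOf_dvd_of_pow_eq_one h)

theorem MonoidHom.exists_rightInverse_of_coprime {H K : Type*} [Group H] [Group K] [Finite H]
    (f : H →* K) (hf : Function.Surjective f) (hcop : (Nat.card f.ker).Coprime (Nat.card K)) :
    ∃ s : K →* H, Function.RightInverse s f := by
  have hindex : f.ker.index = Nat.card K := by
    rw [Subgroup.index_ker, f.range_eq_top.mpr hf, Subgroup.card_top]
  obtain ⟨C, hC⟩ := Subgroup.exists_left_complement'_of_coprime (hindex ▸ hcop)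
  have hinj : Function.Injective (f.comp C.subtype) := by
    rw [injective_iff_map_eq_one]
    intro c hc
    exact Subtype.ext (Subgroup.disjoint_def.mp hC.disjoint c.2 hc)
  have hsurj : Function.Surjective (f.comp C.subtype) := by
    intro k
    obtain ⟨h, rfl⟩ := hf k
    obtain ⟨⟨c, n⟩, hcn⟩ := (hC.existsUnique h).exists
    refine ⟨c, ?_⟩
    simp [← hcn, f.mem_ker.mp n.2]
  let e := MulEquiv.ofBijective _ ⟨hinj, hsurj⟩
  exact ⟨C.subtype.comp e.symm.toMonoidHom, e.apply_symm_apply⟩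

def ConjRep.map {R G H : Type*} [Group R] [Group G] [Group H] (f : G →* H) :
    ConjRep R G → ConjRep R H :=
  Quotient.map f.comp fun _ _ ⟨g, hg⟩ => ⟨f g, fun x => by simp [hg x]⟩

theorem ConjRep.map_mk {R G H : Type*} [Group R] [Group G] [Group H] (f : G →* H)
    (α : R →* G) : ConjRep.map f (ConjRep.mk α) = ConjRep.mk (f.comp α) :=
  rfl

section CoprimeQuotient

variable {p : ℕ} {G : Type*} [Group G] {Z : Subgroup G} [Z.Normal] {P : Type*} [Group P]

namespace QuotientGroup

theorem mk'_comp_subtype_injective_of_isPGroup (hord : (Nat.card Z).Coprime p)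
    {H : Subgroup G} (hH : IsPGroup p H) : Function.Injective ((mk' Z).comp H.subtype) := by
  rw [injective_iff_map_eq_one]
  intro h hh
  obtain ⟨k, hk⟩ := hH h
  exact Subtype.ext <| Subgroup.eq_one_of_pow_eq_one_of_coprime_card hord
    ((QuotientGroup.eq_one_iff _).mp hh) (congrArg Subtype.val hk)

theorem mk'_comp_injective_of_isPGroup (hZ : Z ≤ Subgroup.center G)
    (hord : (Nat.card Z).Coprime p) (hP : IsPGroup p P) :
    Function.Injective ((mk' Z).comp : (P →* G) → (P →* G ⧸ Z)) := by
  intro α β h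
  ext x
  obtain ⟨k, hk⟩ := hP x
  set z := (α x)⁻¹ * β x
  have hzZ : z ∈ Z := QuotientGroup.eq.mp (DFunLike.congr_fun h x)
  have hcomm : Commute (α x) z := Subgroup.mem_center_iff.mp (hZ hzZ) (α x)
  have hz : z ^ p ^ k = 1 := by
    calc z ^ p ^ k = (α x) ^ p ^ k * z ^ p ^ k := by rw [← map_pow, hk, map_one, one_mul]
      _ = (β x) ^ p ^ k := by rw [← hcomm.mul_pow, mul_inv_cancel_left]
      _ = 1 := by rw [← map_pow, hk, map_one]
  exact inv_mul_eq_one.mp (Subgroup.eq_one_of_pow_eq_one_of_coprime_card hord hzZ hz)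

theorem exists_conj_iff_exists_conj_mk (hZ : Z ≤ Subgroup.center G)
    (hord : (Nat.card Z).Coprime p) (hP : IsPGroup p P) (α β : P →* G) :
    (∃ g : G, ∀ x, β x = g * α x * g⁻¹) ↔
      ∃ g : G ⧸ Z, ∀ x, (β x : G ⧸ Z) = g * (α x : G ⧸ Z) * g⁻¹ := by
  constructor
  · rintro ⟨g, hg⟩
    exact ⟨g, fun x => by simp [hg x]⟩
  · rintro ⟨g, hg⟩
    obtain ⟨g, rfl⟩ := QuotientGroup.mk_surjective g
    have hβ : (mk' Z).comp ((MulAut.conj g).toMonoidHom.comp α) = (mk' Z).comp β := by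
      ext x
      simp [hg x]
    exact ⟨g, fun x => (DFunLike.congr_fun (mk'_comp_injective_of_isPGroup hZ hord hP hβ) x).symm⟩

theorem exists_mk'_comp_eq_of_isPGroup [Fact p.Prime] [Finite G]
    (hord : (Nat.card Z).Coprime p) (hP : IsPGroup p P) (β : P →* G ⧸ Z) :
    ∃ α : P →* G, (mk' Z).comp α = β := by
  set R := (β.range).comap (mk' Z)
  set f := (mk' Z).subgroupComap β.range
  have hZR : Z ≤ R := (QuotientGroup.ker_mk' Z).symm.le.trans (MonoidHom.ker_le_comap _ _)
  have hker : f.ker = Z.subgroupOf R := by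
    ext x
    rw [MonoidHom.mem_ker, Subgroup.mem_subgroupOf, ← QuotientGroup.eq_one_iff, ← Subtype.val_inj]
    rfl
  obtain ⟨n, hn⟩ := IsPGroup.iff_card.mp (hP.of_surjective _ β.rangeRestrict_surjective)
  have hcop : (Nat.card f.ker).Coprime (Nat.card β.range) := by
    rw [hker, Nat.card_congr (Subgroup.subgroupOfEquivOfLe hZR).toEquiv, hn]
    exact hord.pow_right n
  obtain ⟨s, hs⟩ := f.exists_rightInverse_of_coprime
    ((mk' Z).subgroupComap_surjective_of_surjective _ (mk'_surjective Z)) hcop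
  refine ⟨R.subtype.comp (s.comp β.rangeRestrict), ?_⟩
  ext x
  exact congrArg Subtype.val (hs (β.rangeRestrict x))

end QuotientGroup

theorem ConjRep.map_mk'_bijective [Fact p.Prime] [Finite G] (hZ : Z ≤ Subgroup.center G)
    (hord : (Nat.card Z).Coprime p) (hP : IsPGroup p P) :
    Function.Bijective (ConjRep.map (R := P) (mk' Z)) := by
  constructor
  · rintro ⟨α⟩ ⟨β⟩ h
    exact Quotient.sound ((exists_conj_iff_exists_conj_mk hZ hord hP α β).mpr (Quotient.exact h))
  · rintro ⟨β⟩
    obtain ⟨α, rfl⟩ := exists_mk'_comp_eq_of_isPGroup hord hP β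
    exact ⟨ConjRep.mk α, rfl⟩

end CoprimeQuotient

/-- If `Z ≤ Z(G)` is a central subgroup of order prime to `p`, then the quotient map
`G → G/Z` induces a bijection `Rep(P,G) ≃ Rep(P,G/Z)` for every finite `p`-group `P`;
in particular it restricts to a fusion preserving isomorphism from a Sylow `p`-subgroup
of `G` onto a Sylow `p`-subgroup of `G/Z`. -/
theorem stmt3 (p : ℕ) [Fact p.Prime] (G : Type) [Group G] [Finite G]
    (Z : Subgroup G) [Z.Normal] (hZ : Z ≤ Subgroup.center G)
    (hord : Nat.Coprime (Nat.card Z) p) :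
    (∀ (P : Type) [Group P] [Finite P], IsPGroup p P →
      ∃ e : ConjRep P G ≃ ConjRep P (G ⧸ Z), ∀ α : P →* G,
        e (ConjRep.mk α) = ConjRep.mk ((QuotientGroup.mk' Z).comp α)) ∧
    (∀ S : Sylow p G, ∃ (S' : Sylow p (G ⧸ Z))
        (φ : (S : Subgroup G) ≃* (S' : Subgroup (G ⧸ Z))),
      (∀ x : (S : Subgroup G), (φ x : G ⧸ Z) = QuotientGroup.mk (x : G)) ∧
      IsFusionPreserving (S : Subgroup G) (S' : Subgroup (G ⧸ Z)) φ) := by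
  refine ⟨fun P _ _ hP =>
    ⟨Equiv.ofBijective _ (ConjRep.map_mk'_bijective hZ hord hP), ConjRep.map_mk _⟩, fun S => ?_⟩
  have hrange : ((mk' Z).comp (S : Subgroup G).subtype).range =
      S.mapSurjective (mk'_surjective Z) := by
    rw [MonoidHom.range_comp, Subgroup.range_subtype, Sylow.coe_mapSurjective]
  refine ⟨S.mapSurjective (mk'_surjective Z),
    (MonoidHom.ofInjective (mk'_comp_subtype_injective_of_isPGroup hord S.isPGroup')).trans
      (MulEquiv.subgroupCongr hrange), fun _ => rfl, fun P Q hP _ α => ?_⟩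
  exact exists_conj_iff_exists_conj_mk hZ hord (S.isPGroup'.to_le hP) P.subtype (Q.subtype.comp α)
end

section
/- Let H ≤ G be finite groups and p a prime. Then the fusion system F_p(H) is a full subcategory of F_p(G) (i.e., for all p-subgroups P, Q ≤ H, every homomorphism P → Q induced by conjugation in G is already induced by conjugation in H) if and only if for every finite p-group P the natural map Rep(P,H) → Rep(P,G) is injective. -/
/-!
Both directions compare a homomorphism with its image. If `α, β : P → H` are conjugate by
`g ∈ G`, then conjugation by `g` maps the `p`-subgroup `α(P) ≤ H` onto `β(P) ≤ H`; fullness of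
`F_p(H)` replaces `g` by some `h ∈ H` inducing the same map on `α(P)`, and `h` conjugates `α` to
`β`. Conversely, a `G`-conjugation `φ : P → Q` between `p`-subgroups of `H` makes the inclusion
of `P` and `φ` two `G`-conjugate elements of `Hom(P, H)`, and injectivity of
`Rep(P,H) → Rep(P,G)` makes them `H`-conjugate.
-/

namespace Subgroup

variable {G : Type*} [Group G]

/-- `F_p(H)` is a full subcategory of `F_p(G)`. -/
def FusionFull (p : ℕ) (H : Subgroup G) : Prop :=
  ∀ (P Q : Subgroup G), P ≤ H → Q ≤ H → IsPGroup p P → IsPGroup p Q →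
    ∀ α : P →* Q, (∃ g : G, ∀ x : P, (α x : G) = g * (x : G) * g⁻¹) →
      ∃ h ∈ H, ∀ x : P, (α x : G) = h * (x : G) * h⁻¹

/-- The map `Rep(P,H) → Rep(P,G)` is injective. -/
def RepInjective (P : Type*) [Group P] (H : Subgroup G) : Prop :=
  ∀ α β : P →* H, (∃ g : G, ∀ x : P, (β x : G) = g * (α x : G) * g⁻¹) →
    ∃ h : H, ∀ x : P, β x = h * α x * h⁻¹

def conjHom (g : G) {A B : Subgroup G} (hAB : A.map (MulAut.conj g).toMonoidHom ≤ B) :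
    A →* B :=
  (inclusion hAB).comp ((MulAut.conj g).toMonoidHom.subgroupMap A)

@[simp]
theorem coe_conjHom_apply (g : G) {A B : Subgroup G}
    (hAB : A.map (MulAut.conj g).toMonoidHom ≤ B) (a : A) :
    (conjHom g hAB a : G) = g * a * g⁻¹ :=
  rfl

variable {H : Subgroup G} {P : Type*} [Group P]

theorem range_subtype_comp_le (α : P →* H) : (H.subtype.comp α).range ≤ H := by
  rw [MonoidHom.range_comp]
  exact map_subtype_le _

theorem _root_.IsPGroup.range_subtype_comp {p : ℕ} (hP : IsPGroup p P) (α : P →* H) :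
    IsPGroup p (H.subtype.comp α).range :=
  hP.of_surjective _ (H.subtype.comp α).rangeRestrict_surjective

theorem repInjective_of_fusionFull {p : ℕ} (hH : H.FusionFull p) (hP : IsPGroup p P) :
    H.RepInjective P := by
  rintro α β ⟨g, hg⟩
  set f := H.subtype.comp α
  have hconj : (MulAut.conj g).toMonoidHom.comp f = H.subtype.comp β := by
    ext x
    simp [f, hg]
  have hle : f.range.map (MulAut.conj g).toMonoidHom ≤ (H.subtype.comp β).range := by
    rw [MonoidHom.map_range, hconj]
  obtain ⟨h, hh, hh_conj⟩ := hH _ _ (range_subtype_comp_le α) (range_subtype_comp_le β)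
    (hP.range_subtype_comp α) (hP.range_subtype_comp β) (conjHom g hle) ⟨g, fun _ => rfl⟩
  refine ⟨⟨h, hh⟩, fun x => Subtype.ext ?_⟩
  simpa [f, hg] using hh_conj ⟨f x, x, rfl⟩

theorem fusionFull_of_repInjective {p : ℕ}
    (hH : ∀ (P : Subgroup G), IsPGroup p P → H.RepInjective P) : H.FusionFull p := by
  rintro P Q hPH hQH hP - α ⟨g, hg⟩
  obtain ⟨h, hh⟩ := hH P hP (inclusion hPH) ((inclusion hQH).comp α) ⟨g, hg⟩
  exact ⟨h, h.2, fun x => congrArg Subtype.val (hh x)⟩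

end Subgroup

open Subgroup in
theorem stmt4_general (p : ℕ) (G : Type) [Group G] [Finite G] (H : Subgroup G) :
    (∀ (P Q : Subgroup G), P ≤ H → Q ≤ H → IsPGroup p P → IsPGroup p Q →
      ∀ α : P →* Q, (∃ g : G, ∀ x : P, (α x : G) = g * (x : G) * g⁻¹) →
        ∃ h ∈ H, ∀ x : P, (α x : G) = h * (x : G) * h⁻¹) ↔
    (∀ (P : Type) [Group P] [Finite P], IsPGroup p P →
      ∀ α β : P →* H, (∃ g : G, ∀ x : P, ((β x : G)) = g * (α x : G) * g⁻¹) →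
        ∃ h : H, ∀ x : P, β x = h * α x * h⁻¹) :=
  ⟨fun hH _ _ _ hP => repInjective_of_fusionFull hH hP,
    fun hH => fusionFull_of_repInjective fun P hP => hH P hP⟩

/-- For finite groups `H ≤ G`, the fusion system `F_p(H)` is a full subcategory of `F_p(G)`
(every homomorphism between `p`-subgroups of `H` induced by conjugation in `G` is already
induced by conjugation in `H`) if and only if, for every finite `p`-group `P`, the natural
map `Rep(P,H) → Rep(P,G)` is injective. -/
theorem stmt4 (p : ℕ) [Fact p.Prime] (G : Type) [Group G] [Finite G] (H : Subgroup G) :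
    (∀ (P Q : Subgroup G), P ≤ H → Q ≤ H → IsPGroup p P → IsPGroup p Q →
      ∀ α : P →* Q, (∃ g : G, ∀ x : P, (α x : G) = g * (x : G) * g⁻¹) →
        ∃ h ∈ H, ∀ x : P, (α x : G) = h * (x : G) * h⁻¹) ↔
    (∀ (P : Type) [Group P] [Finite P], IsPGroup p P →
      ∀ α β : P →* H, (∃ g : G, ∀ x : P, ((β x : G)) = g * (α x : G) * g⁻¹) →
        ∃ h : H, ∀ x : P, β x = h * α x * h⁻¹) :=
  stmt4_general p G H
end

section
/- Let p be an odd prime and let q, q' be integers prime to p. Let s and s' be the multiplicative orders of q and q' modulo p. Then the closures of the subgroups generated by q and by q' in ℤ_p^× coincide if and only if s = s' and v_p(q^s − 1) = v_p(q'^{s'} − 1), where v_p denotes the p-adic valuation. -/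
/-!
Both closures are determined by their images in the finite quotients `(ℤ/pⁿ)ˣ`, which are cyclic
for odd `p`; so the closures agree iff `q` and `q'` have the same order modulo every `pⁿ`.
By lifting the exponent, with `s` the order of `q` mod `p` and `k = v_p(q^s - 1)`, the order of `q`
mod `pⁿ` is `s · p^(n - k)` (and just `s` when `q^s = 1`), and this sequence of orders
determines the pair `(s, k)`.
-/

open PadicInt Subgroup

theorem ZMod.orderOf_intCast_dvd_iff (m : ℕ) (q : ℤ) (t : ℕ) :
    orderOf (q : ZMod m) ∣ t ↔ (m : ℤ) ∣ q ^ t - 1 := by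
  rw [orderOf_dvd_iff_pow_eq_one, ← Int.cast_pow, ← Int.cast_one, intCast_eq_intCast_iff_dvd_sub,
    dvd_sub_comm]

theorem ENat.eq_of_forall_toNat_natCast_sub_eq {a b : ℕ∞}
    (h : ∀ n : ℕ, ((n : ℕ∞) - a).toNat = ((n : ℕ∞) - b).toNat) : a = b := by
  wlog hab : a < b generalizing a b
  · rcases (not_lt.mp hab).lt_or_eq with hba | hba
    · exact (this (fun n => (h n).symm) hba).symm
    · exact hba.symm
  lift a to ℕ using hab.ne_top
  have hb : ((a + 1 : ℕ) : ℕ∞) ≤ b := by exact_mod_cast Order.add_one_le_of_lt hab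
  have := h (a + 1)
  rw [tsub_eq_zero_of_le hb, ← ENat.natCast_sub] at this
  simp at this

theorem ENat.toNat_inj_of_one_le {a b : ℕ∞} (ha : 1 ≤ a) (hb : 1 ≤ b) :
    a.toNat = b.toNat ↔ a = b := by
  induction a using ENat.recTopCoe <;> induction b using ENat.recTopCoe <;>
    simp_all [eq_comm] <;> omega

theorem padicValInt_eq_toNat_emultiplicity (p : ℕ) (z : ℤ) :
    padicValInt p z = (emultiplicity (p : ℤ) z).toNat := by
  rw [padicValInt, ← Int.emultiplicity_natAbs, Nat.toNat_emultiplicity]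

theorem IsCyclic.zpowers_eq_ker_powMonoidHom_orderOf {G : Type*} [CommGroup G] [IsCyclic G]
    [Finite G] (x : G) : zpowers x = (powMonoidHom (orderOf x) : G →* G).ker := by
  refine eq_of_le_of_card_ge (zpowers_le.mpr (pow_orderOf_eq_one x)) ?_
  rw [IsCyclic.card_powMonoidHom_ker, Nat.card_zpowers, Nat.gcd_eq_right (orderOf_dvd_natCard x)]

theorem IsCyclic.zpowers_eq_zpowers_iff {G : Type*} [CommGroup G] [IsCyclic G] [Finite G]
    {x y : G} : zpowers x = zpowers y ↔ orderOf x = orderOf y := by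
  refine ⟨fun h => ?_, fun h => ?_⟩
  · rw [← Nat.card_zpowers, h, Nat.card_zpowers]
  · rw [zpowers_eq_ker_powMonoidHom_orderOf, h, ← zpowers_eq_ker_powMonoidHom_orderOf]

theorem Subgroup.topologicalClosure_zpowers_le_iff {G : Type*} [TopologicalSpace G] [Group G]
    [IsTopologicalGroup G] {x : G} {H : Subgroup G} (hH : IsClosed (H : Set G)) :
    (zpowers x).topologicalClosure ≤ H ↔ x ∈ H :=
  ⟨fun h => h (le_topologicalClosure _ (mem_zpowers x)),
    fun h => topologicalClosure_minimal _ (zpowers_le.mpr h) hH⟩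

section LiftingTheExponent

variable {p : ℕ} [hp : Fact p.Prime] {q : ℤ}

theorem ZMod.orderOf_intCast_pos (hq : ¬ (p : ℤ) ∣ q) : 0 < orderOf (q : ZMod p) := by
  have hq0 : (q : ZMod p) ≠ 0 := by rwa [Ne, ZMod.intCast_zmod_eq_zero_iff_dvd]
  exact orderOf_pos_iff.mpr (isOfFinOrder_iff_pow_eq_one.mpr
    ⟨p - 1, by have := hp.out.two_le; omega, ZMod.pow_card_sub_one_eq_one hq0⟩)

theorem one_le_emultiplicity_pow_orderOf_sub_one (q : ℤ) :
    1 ≤ emultiplicity (p : ℤ) (q ^ orderOf (q : ZMod p) - 1) := by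
  have h := (ZMod.orderOf_intCast_dvd_iff p q _).mp dvd_rfl
  exact_mod_cast pow_dvd_iff_le_emultiplicity.mp ((pow_one (p : ℤ)).symm ▸ h)

theorem emultiplicity_pow_orderOf_mul_sub_one (hodd : Odd p) (hq : ¬ (p : ℤ) ∣ q) (m : ℕ) :
    emultiplicity (p : ℤ) (q ^ (orderOf (q : ZMod p) * m) - 1) =
      emultiplicity (p : ℤ) (q ^ orderOf (q : ZMod p) - 1) + emultiplicity p m := by
  have h := Int.emultiplicity_pow_sub_pow hp.out hodd (y := 1)
    ((ZMod.orderOf_intCast_dvd_iff p q _).mp dvd_rfl)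
    (fun h => hq ((Nat.prime_iff_prime_int.mp hp.out).dvd_of_dvd_pow h)) m
  rwa [← pow_mul, one_pow] at h

theorem pow_dvd_pow_orderOf_mul_sub_one_iff (hodd : Odd p) (hq : ¬ (p : ℤ) ∣ q) (n m : ℕ) :
    (p : ℤ) ^ n ∣ q ^ (orderOf (q : ZMod p) * m) - 1 ↔
      p ^ ((n : ℕ∞) - emultiplicity (p : ℤ) (q ^ orderOf (q : ZMod p) - 1)).toNat ∣ m := by
  rw [pow_dvd_iff_le_emultiplicity, pow_dvd_iff_le_emultiplicity,
    emultiplicity_pow_orderOf_mul_sub_one hodd hq, ENat.natCast_toNat, tsub_le_iff_left]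
  exact (tsub_le_self.trans_lt (ENat.natCast_lt_top n)).ne

/-- The multiplicity is `⊤` exactly when `q ^ s = 1`; then `n - ⊤ = 0` and the order is `s`. -/
theorem orderOf_intCast_zmod_prime_pow (hodd : Odd p) (hq : ¬ (p : ℤ) ∣ q) {n : ℕ} (hn : n ≠ 0) :
    orderOf (q : ZMod (p ^ n)) = orderOf (q : ZMod p) *
      p ^ ((n : ℕ∞) - emultiplicity (p : ℤ) (q ^ orderOf (q : ZMod p) - 1)).toNat := by
  refine Nat.dvd_right_iff_eq.mp fun t => ?_
  rw [ZMod.orderOf_intCast_dvd_iff, Nat.cast_pow]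
  constructor
  · intro h
    obtain ⟨m, rfl⟩ := (ZMod.orderOf_intCast_dvd_iff p q t).mpr ((dvd_pow_self _ hn).trans h)
    exact mul_dvd_mul_left _ ((pow_dvd_pow_orderOf_mul_sub_one_iff hodd hq n m).mp h)
  · rintro ⟨c, rfl⟩
    rw [mul_assoc, pow_dvd_pow_orderOf_mul_sub_one_iff hodd hq]
    exact dvd_mul_right _ _

end LiftingTheExponent

section OrdersModPrimePowers

variable {p : ℕ} [hp : Fact p.Prime] {q q' : ℤ}

theorem forall_orderOf_intCast_zmod_prime_pow_eq_iff (hodd : Odd p) (hq : ¬ (p : ℤ) ∣ q)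
    (hq' : ¬ (p : ℤ) ∣ q') :
    (∀ n, orderOf (q : ZMod (p ^ n)) = orderOf (q' : ZMod (p ^ n))) ↔
      orderOf (q : ZMod p) = orderOf (q' : ZMod p) ∧
        emultiplicity (p : ℤ) (q ^ orderOf (q : ZMod p) - 1) =
          emultiplicity (p : ℤ) (q' ^ orderOf (q' : ZMod p) - 1) := by
  have hord := fun n (hn : n ≠ 0) => orderOf_intCast_zmod_prime_pow hodd hq hn
  have hord' := fun n (hn : n ≠ 0) => orderOf_intCast_zmod_prime_pow hodd hq' hn
  have hE := one_le_emultiplicity_pow_orderOf_sub_one (p := p) q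
  have hE' := one_le_emultiplicity_pow_orderOf_sub_one (p := p) q'
  have hs0 := ZMod.orderOf_intCast_pos hq
  generalize emultiplicity (p : ℤ) (q ^ orderOf (q : ZMod p) - 1) = E at *
  generalize emultiplicity (p : ℤ) (q' ^ orderOf (q' : ZMod p) - 1) = E' at *
  generalize orderOf (q : ZMod p) = s at *
  generalize orderOf (q' : ZMod p) = s' at *
  constructor
  · intro h
    have hs : s = s' := by
      simpa [hord, hord', tsub_eq_zero_of_le, hE, hE'] using h 1
    subst hs
    refine ⟨rfl, ENat.eq_of_forall_toNat_natCast_sub_eq fun n => ?_⟩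
    rcases eq_or_ne n 0 with rfl | hn
    · simp
    have h := h n
    rw [hord n hn, hord' n hn] at h
    exact Nat.pow_right_injective hp.out.two_le (Nat.eq_of_mul_eq_mul_left hs0 h)
  · rintro ⟨rfl, rfl⟩ n
    rcases eq_or_ne n 0 with rfl | hn
    · simp [Subsingleton.elim _ (1 : ZMod 1)]
    · rw [hord n hn, hord' n hn]

end OrdersModPrimePowers

namespace PadicInt

variable {p : ℕ} [hp : Fact p.Prime]

theorem toZModPow_eq_toZModPow_iff (n : ℕ) (x y : ℤ_[p]) :
    toZModPow n x = toZModPow n y ↔ ‖x - y‖ ≤ (p : ℝ) ^ (-(n : ℤ)) := by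
  rw [norm_le_pow_iff_mem_span_pow, ← ker_toZModPow, RingHom.mem_ker, map_sub, sub_eq_zero]

theorem mem_closure_iff_forall_toZModPow {s : Set ℤ_[p]} {x : ℤ_[p]} :
    x ∈ closure s ↔ ∀ n, ∃ y ∈ s, toZModPow n x = toZModPow n y := by
  simp_rw [Metric.mem_closure_iff, toZModPow_eq_toZModPow_iff, ← dist_eq_norm]
  refine ⟨fun h n => ?_, fun h ε hε => ?_⟩
  · obtain ⟨y, hy, hxy⟩ := h _ (zpow_pos (by exact_mod_cast hp.out.pos : (0 : ℝ) < p) (-(n : ℤ)))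
    exact ⟨y, hy, hxy.le⟩
  · obtain ⟨n, hn⟩ := exists_pow_neg_lt p hε
    obtain ⟨y, hy, hxy⟩ := h n
    exact ⟨y, hy, hxy.trans_lt hn⟩

variable (p) in
noncomputable def unitsToZModPow (n : ℕ) : ℤ_[p]ˣ →* (ZMod (p ^ n))ˣ :=
  Units.map (toZModPow n : ℤ_[p] →+* ZMod (p ^ n)).toMonoidHom

theorem mem_closure_zpowers_iff {u x : ℤ_[p]ˣ} :
    x ∈ _root_.closure (zpowers u : Set ℤ_[p]ˣ) ↔
      ∀ n, unitsToZModPow p n x ∈ zpowers (unitsToZModPow p n u) := by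
  rw [Units.isOpenEmbedding_val.isInducing.closure_eq_preimage_closure_image, Set.mem_preimage,
    mem_closure_iff_forall_toZModPow]
  refine forall_congr' fun n => ⟨?_, ?_⟩
  · rintro ⟨_, ⟨_, ⟨k, rfl⟩, rfl⟩, h⟩
    exact ⟨k, (map_zpow _ u k).symm.trans (Units.ext h.symm)⟩
  · rintro ⟨k, h⟩
    exact ⟨_, ⟨_, ⟨k, rfl⟩, rfl⟩, (congrArg Units.val ((map_zpow _ u k).trans h)).symm⟩

theorem topologicalClosure_zpowers_eq_iff {u u' : ℤ_[p]ˣ} :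
    (zpowers u).topologicalClosure = (zpowers u').topologicalClosure ↔
      ∀ n, zpowers (unitsToZModPow p n u) = zpowers (unitsToZModPow p n u') := by
  simp only [le_antisymm_iff (a := zpowers _), zpowers_le, forall_and,
    le_antisymm_iff (a := (zpowers u).topologicalClosure),
    topologicalClosure_zpowers_le_iff (isClosed_topologicalClosure _)]
  exact and_congr mem_closure_zpowers_iff mem_closure_zpowers_iff

theorem orderOf_unitsToZModPow_of_val_eq_intCast {u : ℤ_[p]ˣ} {q : ℤ} (hu : (u : ℤ_[p]) = q)
    (n : ℕ) : orderOf (unitsToZModPow p n u) = orderOf (q : ZMod (p ^ n)) := by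
  rw [← orderOf_units]
  simp [unitsToZModPow, hu]

end PadicInt

open PadicInt in
/-- For an odd prime `p` and integers `q, q'` prime to `p`, the closed subgroups of
`ℤ_pˣ` generated by `q` and `q'` coincide if and only if `q` and `q'` have the same
multiplicative order `s = s'` modulo `p` and `v_p(q^s - 1) = v_p(q'^{s'} - 1)`. -/
theorem stmt12 (p : ℕ) [Fact p.Prime] (hoddp : Odd p) (q q' : ℤ)
    (hq : IsCoprime q (p : ℤ)) (hq' : IsCoprime q' (p : ℤ))
    (u u' : ℤ_[p]ˣ) (hu : (u : ℤ_[p]) = (q : ℤ_[p])) (hu' : (u' : ℤ_[p]) = (q' : ℤ_[p])) :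
    (Subgroup.zpowers u).topologicalClosure = (Subgroup.zpowers u').topologicalClosure ↔
      (orderOf ((q : ZMod p)) = orderOf ((q' : ZMod p)) ∧
        padicValInt p (q ^ orderOf ((q : ZMod p)) - 1) =
          padicValInt p (q' ^ orderOf ((q' : ZMod p)) - 1)) := by
  have hpZ : Prime (p : ℤ) := Nat.prime_iff_prime_int.mp Fact.out
  have hpq : ¬ (p : ℤ) ∣ q := fun h => hpZ.not_isUnit (hq.isUnit_of_dvd' h dvd_rfl)
  have hpq' : ¬ (p : ℤ) ∣ q' := fun h => hpZ.not_isUnit (hq'.isUnit_of_dvd' h dvd_rfl)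
  have := ZMod.isCyclic_units_of_prime_pow p Fact.out (hoddp.ne_two_of_dvd_nat dvd_rfl)
  -- `toNat` sends `⊤` (the case `q ^ s = 1`) to `0 = padicValInt p 0`, and is injective on `[1, ⊤]`
  simp only [topologicalClosure_zpowers_eq_iff, IsCyclic.zpowers_eq_zpowers_iff,
    orderOf_unitsToZModPow_of_val_eq_intCast hu, orderOf_unitsToZModPow_of_val_eq_intCast hu',
    forall_orderOf_intCast_zmod_prime_pow_eq_iff hoddp hpq hpq', padicValInt_eq_toNat_emultiplicity,
    ENat.toNat_inj_of_one_le (one_le_emultiplicity_pow_orderOf_sub_one _)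
      (one_le_emultiplicity_pow_orderOf_sub_one _)]
end

section
/- Let q and q' be odd integers. Then the closures of the subgroups generated by q and by q' in ℤ_2^× coincide if and only if q ≡ q' (mod 8) and v_2(q² − 1) = v_2(q'² − 1), where v_2 denotes the 2-adic valuation. -/
/-!
If `u ^ 2 = 1 + 2 ^ k * t` with `t` odd and `k ≥ 2`, then `(u ^ 2) ^ 2 ^ j = 1 + 2 ^ (k + j) * s`
with `s` odd, so the powers of `u ^ 2` can be corrected one binary digit at a time to approximate
any element of `1 + 2 ^ k ℤ_2`. Hence the closure of `⟨u⟩` is `(1 + 2 ^ k ℤ_2) ∪ u (1 + 2 ^ k ℤ_2)`,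
while it is `{1, u}` when `u ^ 2 = 1`. For odd integers with `q ^ 2 ≠ 1 ≠ q' ^ 2`, two such sets
agree iff `k = k'` and `q ≡ q' (mod 2 ^ k)`; given `k = k'`, the latter is equivalent to
`q ≡ q' (mod 8)`, since `(q - q') (q + q') = (q ^ 2 - 1) - (q' ^ 2 - 1)` is divisible by
`2 ^ (k + 1)` while `q + q'` is twice an odd number.
-/

section CommRing

variable {R : Type*} [CommRing R]

theorem exists_odd_one_add_two_pow_mul_pow_two_pow {m : ℕ} (hm : 2 ≤ m) {t : R} (ht : Odd t)
    (j : ℕ) : ∃ s : R, Odd s ∧ (1 + 2 ^ m * t) ^ 2 ^ j = 1 + 2 ^ (m + j) * s := by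
  have hdvd : (2 : ℕ) * (2 : R) ^ m * 2 ∣ (2 ^ m) ^ 2 :=
    ⟨2 ^ (m - 2), by
      rw [← pow_mul, Nat.cast_ofNat, ← pow_succ', ← pow_succ, ← pow_add]; congr 1; omega⟩
  obtain ⟨y, hy⟩ := ZMod.exists_one_add_mul_pow_prime_pow_eq Nat.prime_two
    (dvd_pow_self 2 (by omega)) hdvd t j
  refine ⟨t + 2 * y, ht.add_even (even_two_mul y), ?_⟩
  rw [hy]; push_cast; ring

theorem Units.dvd_zpow_sub_one_or_dvd_zpow_sub_self {u : Rˣ} {d : R} (h : d ∣ (u : R) ^ 2 - 1)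
    (j : ℤ) : d ∣ ((u ^ j : Rˣ) : R) - 1 ∨ d ∣ ((u ^ j : Rˣ) : R) - u := by
  have hinv : ((u⁻¹ : Rˣ) : R) * u = 1 := u.inv_mul
  induction j using Int.induction_on with
  | zero => simp
  | succ i ih =>
    rw [zpow_add_one, Units.val_mul]
    rcases ih with ⟨a, ha⟩ | ⟨a, ha⟩
    · exact .inr ⟨a * u, by linear_combination (u : R) * ha⟩
    · obtain ⟨b, hb⟩ := h
      exact .inl ⟨a * u + b, by linear_combination (u : R) * ha + hb⟩
  | pred i ih =>
    rw [zpow_sub_one, Units.val_mul]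
    rcases ih with ⟨a, ha⟩ | ⟨a, ha⟩
    · obtain ⟨b, hb⟩ := h
      exact .inr ⟨(a - b) * (u⁻¹ : Rˣ), by
        linear_combination ((u⁻¹ : Rˣ) : R) * ha - ((u⁻¹ : Rˣ) : R) * hb + (u : R) * hinv⟩
    · exact .inl ⟨a * (u⁻¹ : Rˣ), by linear_combination ((u⁻¹ : Rˣ) : R) * ha + hinv⟩

theorem dvd_sq_sub_one_of_dvd_sub_one_or_dvd_sub {d q r : R} (hq : d ∣ q ^ 2 - 1)
    (hr : d ∣ r - 1 ∨ d ∣ r - q) : d ∣ r ^ 2 - 1 := by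
  rcases hr with ⟨a, ha⟩ | ⟨a, ha⟩
  · exact ⟨a * (r + 1), by linear_combination (r + 1) * ha⟩
  · obtain ⟨b, hb⟩ := hq
    exact ⟨a * (r + q) + b, by linear_combination (r + q) * ha + hb⟩

theorem two_pow_succ_dvd_sq_sub_one {k : ℕ} {r : R} (hk : k ≠ 0) (h : 2 ^ k ∣ r - 1) :
    2 ^ (k + 1) ∣ r ^ 2 - 1 := by
  obtain ⟨a, ha⟩ := h
  obtain ⟨k, rfl⟩ : ∃ j, k = j + 1 := ⟨k - 1, by omega⟩
  exact ⟨a * (2 ^ k * a + 1), by linear_combination (r + 1) * ha + 2 ^ (k + 1) * a * ha⟩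

end CommRing

namespace Subgroup

variable {G : Type*} [Group G] [TopologicalSpace G] [IsTopologicalGroup G]

theorem topologicalClosure_zpowers_eq_iff {x y : G} :
    (zpowers x).topologicalClosure = (zpowers y).topologicalClosure ↔
      x ∈ (zpowers y).topologicalClosure ∧ y ∈ (zpowers x).topologicalClosure := by
  refine ⟨fun h => ⟨h ▸ le_topologicalClosure _ (mem_zpowers x),
    h ▸ le_topologicalClosure _ (mem_zpowers y)⟩, fun ⟨hx, hy⟩ => le_antisymm ?_ ?_⟩
  · exact topologicalClosure_minimal _ (zpowers_le.mpr hx) (isClosed_topologicalClosure _)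
  · exact topologicalClosure_minimal _ (zpowers_le.mpr hy) (isClosed_topologicalClosure _)

theorem mem_topologicalClosure_zpowers_of_sq_eq_one [T1Space G] {u x : G} (hu : u ^ 2 = 1) :
    x ∈ (zpowers u).topologicalClosure ↔ x = 1 ∨ x = u := by
  have hfin : (zpowers u : Set G).Finite :=
    (isOfFinOrder_iff_pow_eq_one.mpr ⟨2, two_pos, hu⟩).finite_zpowers
  rw [← SetLike.mem_coe, topologicalClosure_coe, hfin.isClosed.closure_eq, SetLike.mem_coe,
    mem_zpowers_iff]
  constructor
  · rintro ⟨j, rfl⟩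
    rw [zpow_eq_zpow_emod' j hu]
    rcases Int.emod_two_eq j with h | h <;> simp [h]
  · rintro (rfl | rfl)
    exacts [⟨0, zpow_zero _⟩, ⟨1, zpow_one _⟩]

end Subgroup

namespace Int

theorem two_pow_dvd_iff_le_padicValInt {z : ℤ} (hz : z ≠ 0) (n : ℕ) :
    2 ^ n ∣ z ↔ n ≤ padicValInt 2 z := by
  simpa [hz] using padicValInt_dvd_iff (p := 2) n z

theorem exists_odd_eq_two_pow_padicValInt_mul {z : ℤ} (hz : z ≠ 0) :
    ∃ t, Odd t ∧ z = 2 ^ padicValInt 2 z * t := by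
  obtain ⟨t, ht⟩ : 2 ^ padicValInt 2 z ∣ z := (two_pow_dvd_iff_le_padicValInt hz _).mpr le_rfl
  refine ⟨t, not_even_iff_odd.mp fun ⟨s, hs⟩ => ?_, ht⟩
  have := (two_pow_dvd_iff_le_padicValInt hz (padicValInt 2 z + 1)).mp
    ⟨s, by linear_combination ht + 2 ^ padicValInt 2 z * hs⟩
  omega

theorem three_le_padicValInt_sq_sub_one {q : ℤ} (hq : Odd q) (h1 : q ^ 2 ≠ 1) :
    3 ≤ padicValInt 2 (q ^ 2 - 1) :=
  (two_pow_dvd_iff_le_padicValInt (sub_ne_zero.mpr h1) 3).mp (eight_dvd_sq_sub_one_of_odd hq)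

theorem two_pow_padicValInt_sq_sub_one_dvd_sub {q q' : ℤ} (hq : Odd q) (h4 : 4 ∣ q - q')
    (h1 : q ^ 2 ≠ 1) (h1' : q' ^ 2 ≠ 1)
    (hv : padicValInt 2 (q ^ 2 - 1) = padicValInt 2 (q' ^ 2 - 1)) :
    2 ^ padicValInt 2 (q ^ 2 - 1) ∣ q - q' := by
  set k := padicValInt 2 (q ^ 2 - 1)
  obtain ⟨t, ht, hqt⟩ := exists_odd_eq_two_pow_padicValInt_mul (sub_ne_zero.mpr h1)
  obtain ⟨t', ht', hqt'⟩ := exists_odd_eq_two_pow_padicValInt_mul (sub_ne_zero.mpr h1')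
  rw [← hv] at hqt'
  obtain ⟨s, hs⟩ := ht.sub_odd ht'
  obtain ⟨m, hm⟩ := h4
  -- `q + q' = 2 * (q - 2 * m)`, and `q - 2 * m` is odd
  have hw : ¬ 2 ∣ q - 2 * m :=
    not_even_iff_odd.mpr (hq.sub_even ⟨m, by ring⟩) ∘ even_iff_two_dvd.mpr
  have hprod : 2 ^ k ∣ (q - q') * (q - 2 * m) :=
    ⟨s, mul_left_cancel₀ two_ne_zero
      (by linear_combination hqt - hqt' + 2 ^ k * hs + (q - q') * hm)⟩
  exact (prime_two.coprime_iff_not_dvd.mpr hw).pow_left.dvd_of_dvd_mul_right hprod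

theorem dvd_sub_one_or_dvd_sub_and_iff {q q' : ℤ} (hq : Odd q) (h1 : q ^ 2 ≠ 1)
    (h1' : q' ^ 2 ≠ 1) :
    (2 ^ padicValInt 2 (q' ^ 2 - 1) ∣ q - 1 ∨ 2 ^ padicValInt 2 (q' ^ 2 - 1) ∣ q - q') ∧
      (2 ^ padicValInt 2 (q ^ 2 - 1) ∣ q' - 1 ∨ 2 ^ padicValInt 2 (q ^ 2 - 1) ∣ q' - q) ↔
    q ≡ q' [ZMOD 8] ∧ padicValInt 2 (q ^ 2 - 1) = padicValInt 2 (q' ^ 2 - 1) := by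
  have hz := sub_ne_zero.mpr h1
  have hz' := sub_ne_zero.mpr h1'
  set k := padicValInt 2 (q ^ 2 - 1)
  set k' := padicValInt 2 (q' ^ 2 - 1)
  have hk : 3 ≤ k := three_le_padicValInt_sq_sub_one hq h1
  constructor
  · rintro ⟨h, h'⟩
    have hle : k' ≤ k := (two_pow_dvd_iff_le_padicValInt hz _).mp
      (dvd_sq_sub_one_of_dvd_sub_one_or_dvd_sub
        ((two_pow_dvd_iff_le_padicValInt hz' _).mpr le_rfl) h)
    have hle' : k ≤ k' := (two_pow_dvd_iff_le_padicValInt hz' _).mp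
      (dvd_sq_sub_one_of_dvd_sub_one_or_dvd_sub
        ((two_pow_dvd_iff_le_padicValInt hz _).mpr le_rfl) h')
    have hsub : 2 ^ k ∣ q' - q := h'.resolve_left fun h => by
      have := (two_pow_dvd_iff_le_padicValInt hz' _).mp
        (two_pow_succ_dvd_sq_sub_one (by omega) h)
      omega
    exact ⟨modEq_iff_dvd.mpr ((pow_dvd_pow 2 hk).trans hsub), le_antisymm hle' hle⟩
  · rintro ⟨h8, hkk⟩
    have h := two_pow_padicValInt_sq_sub_one_dvd_sub hq
      ((show (4 : ℤ) ∣ 8 by norm_num).trans h8.symm.dvd) h1 h1' hkk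
    exact ⟨.inr (hkk ▸ h), .inr (dvd_sub_comm.mp h)⟩

end Int

namespace PadicInt

section

variable {p : ℕ} [Fact p.Prime]

theorem pow_dvd_iff_norm_le (x : ℤ_[p]) (n : ℕ) :
    (p : ℤ_[p]) ^ n ∣ x ↔ ‖x‖ ≤ (p : ℝ) ^ (-n : ℤ) := by
  rw [norm_le_pow_iff_mem_span_pow, Ideal.mem_span_singleton]

theorem units_mem_closure_iff {s : Set ℤ_[p]ˣ} {x : ℤ_[p]ˣ} :
    x ∈ closure s ↔ ∀ n : ℕ, ∃ y ∈ s, (p : ℤ_[p]) ^ n ∣ (x : ℤ_[p]) - y := by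
  rw [Units.isOpenEmbedding_val.isEmbedding.closure_eq_preimage_closure_image, Set.mem_preimage,
    Metric.mem_closure_iff]
  simp only [Set.exists_mem_image, dist_eq_norm, pow_dvd_iff_norm_le]
  constructor
  · intro h n
    obtain ⟨y, hy, hxy⟩ :=
      h _ (zpow_pos (mod_cast (Fact.out : p.Prime).pos : (0 : ℝ) < p) (-n : ℤ))
    exact ⟨y, hy, hxy.le⟩
  · intro h ε hε
    obtain ⟨n, hn⟩ := exists_pow_neg_lt p hε
    obtain ⟨y, hy, hxy⟩ := h n
    exact ⟨y, hy, hxy.trans_lt hn⟩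

end

theorem two_pow_dvd_intCast_iff (n : ℕ) (a : ℤ) :
    (2 : ℤ_[2]) ^ n ∣ (a : ℤ_[2]) ↔ 2 ^ n ∣ a := by
  exact_mod_cast pow_p_dvd_int_iff (p := 2) n a

theorem even_or_odd (x : ℤ_[2]) : Even x ∨ Odd x := by
  obtain ⟨n, hn, hx⟩ := exists_mem_range x
  rw [maximalIdeal_eq_span_p, Ideal.mem_span_singleton] at hx
  obtain ⟨y, hy⟩ := hx
  interval_cases n
  · exact .inl ⟨y, by push_cast at hy; linear_combination hy⟩
  · exact .inr ⟨y, by push_cast at hy; linear_combination hy⟩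

theorem exists_dvd_sub_pow_of_dvd_sub_one {m : ℕ} (hm : 2 ≤ m) {t : ℤ_[2]} (ht : Odd t)
    {y : ℤ_[2]} (hy : 2 ^ m ∣ y - 1) (n : ℕ) : ∃ c : ℕ, 2 ^ n ∣ y - (1 + 2 ^ m * t) ^ c := by
  have ha : Odd (1 + 2 ^ m * t) :=
    odd_one.add_even ((even_two.pow_of_ne_zero (by omega)).mul_right t)
  induction n with
  | zero => exact ⟨0, one_dvd _⟩
  | succ n ih =>
    rcases le_or_gt (n + 1) m with hnm | hmn
    · exact ⟨0, by simpa using (pow_dvd_pow 2 hnm).trans hy⟩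
    obtain ⟨c, d, hd⟩ := ih
    rcases even_or_odd d with ⟨e, rfl⟩ | hd_odd
    · exact ⟨c, e, by rw [hd, pow_succ]; ring⟩
    -- multiplying by `a ^ 2 ^ (n - m) = 1 + 2 ^ n * s` flips the parity of the quotient
    obtain ⟨s, hs, hpow⟩ := exists_odd_one_add_two_pow_mul_pow_two_pow hm ht (n - m)
    rw [show m + (n - m) = n by omega] at hpow
    obtain ⟨e, he⟩ := hd_odd.sub_odd ((ha.pow (n := c)).mul hs)
    refine ⟨c + 2 ^ (n - m), e, ?_⟩
    rw [pow_add, hpow, pow_succ]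
    linear_combination hd + 2 ^ n * he

theorem mem_topologicalClosure_zpowers_iff {u x : ℤ_[2]ˣ} {k : ℕ} {t : ℤ_[2]} (hk : 2 ≤ k)
    (ht : Odd t) (hu : (u : ℤ_[2]) ^ 2 = 1 + 2 ^ k * t) :
    x ∈ (Subgroup.zpowers u).topologicalClosure ↔
      2 ^ k ∣ (x : ℤ_[2]) - 1 ∨ 2 ^ k ∣ (x : ℤ_[2]) - u := by
  rw [← SetLike.mem_coe, Subgroup.topologicalClosure_coe, units_mem_closure_iff]
  simp only [Nat.cast_ofNat]
  constructor
  · intro h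
    obtain ⟨_, ⟨j, rfl⟩, hj⟩ := h k
    rcases Units.dvd_zpow_sub_one_or_dvd_zpow_sub_self (d := 2 ^ k) ⟨t, by rw [hu]; ring⟩ j
      with hone | hself
    · exact .inl (by simpa using dvd_add hj hone)
    · exact .inr (by simpa using dvd_add hj hself)
  · intro hx n
    obtain ⟨y, i, hy, hxy⟩ : ∃ (y : ℤ_[2]) (i : ℕ), 2 ^ k ∣ y - 1 ∧ (x : ℤ_[2]) = y * u ^ i := by
      rcases hx with hx | hx
      · exact ⟨x, 0, hx, by simp⟩
      · refine ⟨x * (u⁻¹ : ℤ_[2]ˣ), 1, ?_, by simp⟩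
        simpa [sub_mul] using hx.mul_right (u⁻¹ : ℤ_[2]ˣ)
    obtain ⟨c, hc⟩ := exists_dvd_sub_pow_of_dvd_sub_one hk ht hy n
    refine ⟨_, Subgroup.npow_mem_zpowers u (2 * c + i), ?_⟩
    rw [hxy, Units.val_pow_eq_pow_val, pow_add, pow_mul, hu, ← sub_mul]
    exact hc.mul_right _

theorem mem_topologicalClosure_zpowers_iff_of_intCast {q r : ℤ} {u x : ℤ_[2]ˣ} (hq : Odd q)
    (h1 : q ^ 2 ≠ 1) (hu : (u : ℤ_[2]) = q) (hx : (x : ℤ_[2]) = r) :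
    x ∈ (Subgroup.zpowers u).topologicalClosure ↔
      2 ^ padicValInt 2 (q ^ 2 - 1) ∣ r - 1 ∨ 2 ^ padicValInt 2 (q ^ 2 - 1) ∣ r - q := by
  set k := padicValInt 2 (q ^ 2 - 1)
  obtain ⟨t, ht, hqt⟩ := Int.exists_odd_eq_two_pow_padicValInt_mul (sub_ne_zero.mpr h1)
  have hu2 : (u : ℤ_[2]) ^ 2 = 1 + 2 ^ k * t := by
    rw [hu]; exact_mod_cast (show q ^ 2 = 1 + 2 ^ k * t by linear_combination hqt)
  have hk := Int.three_le_padicValInt_sq_sub_one hq h1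
  rw [mem_topologicalClosure_zpowers_iff (by omega) ht.intCast hu2, hx, hu,
    ← two_pow_dvd_intCast_iff, ← two_pow_dvd_intCast_iff]
  push_cast
  rfl

theorem mem_topologicalClosure_zpowers_iff_of_intCast_of_sq_eq_one {q r : ℤ} {u x : ℤ_[2]ˣ}
    (h1 : q ^ 2 = 1) (hu : (u : ℤ_[2]) = q) (hx : (x : ℤ_[2]) = r) :
    x ∈ (Subgroup.zpowers u).topologicalClosure ↔ r = 1 ∨ r = q := by
  rw [Subgroup.mem_topologicalClosure_zpowers_of_sq_eq_one
    (Units.ext (by push_cast [hu]; exact_mod_cast h1)), Units.ext_iff, Units.ext_iff, hx, hu,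
    Units.val_one]
  norm_cast

end PadicInt

/-- For odd integers `q, q'`, the closed subgroups of `ℤ_2ˣ` generated by `q` and `q'`
coincide if and only if `q ≡ q' (mod 8)` and `v_2(q² - 1) = v_2(q'² - 1)`. -/
theorem stmt13 (q q' : ℤ) (hq : Odd q) (hq' : Odd q')
    (u u' : ℤ_[2]ˣ) (hu : (u : ℤ_[2]) = (q : ℤ_[2])) (hu' : (u' : ℤ_[2]) = (q' : ℤ_[2])) :
    (Subgroup.zpowers u).topologicalClosure = (Subgroup.zpowers u').topologicalClosure ↔
      (q ≡ q' [ZMOD 8] ∧ padicValInt 2 (q ^ 2 - 1) = padicValInt 2 (q' ^ 2 - 1)) := by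
  rw [Subgroup.topologicalClosure_zpowers_eq_iff]
  by_cases h1 : q ^ 2 = 1 <;> by_cases h1' : q' ^ 2 = 1
  · rw [PadicInt.mem_topologicalClosure_zpowers_iff_of_intCast_of_sq_eq_one h1' hu' hu,
      PadicInt.mem_topologicalClosure_zpowers_iff_of_intCast_of_sq_eq_one h1 hu hu', h1, h1']
    rcases sq_eq_one_iff.mp h1 with rfl | rfl <;> rcases sq_eq_one_iff.mp h1' with rfl | rfl <;>
      simp [Int.ModEq]
  · refine iff_of_false (fun h => h1' ?_) fun h => ?_
    · rcases (PadicInt.mem_topologicalClosure_zpowers_iff_of_intCast_of_sq_eq_one h1 hu hu').mp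
        h.2 with rfl | rfl <;> simp [h1]
    · have := Int.three_le_padicValInt_sq_sub_one hq' h1'
      simp [← h.2, h1] at this
  · refine iff_of_false (fun h => h1 ?_) fun h => ?_
    · rcases (PadicInt.mem_topologicalClosure_zpowers_iff_of_intCast_of_sq_eq_one h1' hu' hu).mp
        h.1 with rfl | rfl <;> simp [h1']
    · have := Int.three_le_padicValInt_sq_sub_one hq h1
      simp [h.2, h1'] at this
  · rw [PadicInt.mem_topologicalClosure_zpowers_iff_of_intCast hq' h1' hu' hu,
      PadicInt.mem_topologicalClosure_zpowers_iff_of_intCast hq h1 hu hu']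
    exact Int.dvd_sub_one_or_dvd_sub_and_iff hq h1 h1'
end

section
/- Let p be a prime and let G₁, G₂ be finite groups with Sylow p-subgroups S₁, S₂. Suppose φ : S₁ → S₂ is a fusion preserving isomorphism. Then φ(S₁ ∩ [G₁,G₁]) = S₂ ∩ [G₂,G₂]. -/
/-!
By the focal subgroup theorem (`Subgroup.commutator_inf_eq_focalSubgroup`), `S ∩ [G,G]` is
generated by the elements `g ∈ S` with `x * g` conjugate in `G` to `x` for some `x ∈ S`.
Two elements `x, y ∈ S₁` of equal order are conjugate in `G₁` iff the homomorphism
`⟨x⟩ → S₁`, `x ↦ y` is realized by conjugation in `G₁`, so a fusion preserving `φ` preserves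
conjugacy of elements of `S₁`, and hence maps these generators of `S₁ ∩ [G₁,G₁]` onto those of
`S₂ ∩ [G₂,G₂]`.
-/

open Subgroup

theorem IsConj.orderOf_eq {G : Type*} [Group G] {x y : G} (h : IsConj x y) :
    orderOf x = orderOf y := by
  obtain ⟨c, hc⟩ := h
  exact hc.orderOf_eq

theorem Subgroup.mem_zpowers_mk_self {G : Type*} [Group G] {a : G} (z : zpowers a) :
    z ∈ zpowers (⟨a, mem_zpowers a⟩ : zpowers a) :=
  let ⟨_, k, hk⟩ := z
  ⟨k, Subtype.ext hk⟩

theorem Subgroup.exists_forall_zpowers_conj_iff_isConj {G M : Type*} [Group G] [Group M]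
    {a : G} (f u : zpowers a →* M) :
    (∃ g : M, ∀ z, f z = g * u z * g⁻¹) ↔ IsConj (u ⟨a, mem_zpowers a⟩) (f ⟨a, mem_zpowers a⟩) := by
  rw [isConj_iff]
  refine exists_congr fun g => ?_
  have h := MonoidHom.eq_iff_eq_on_generator mem_zpowers_mk_self f
    ((MulAut.conj g).toMonoidHom.comp u)
  rw [DFunLike.ext_iff] at h
  exact h.trans eq_comm

theorem Subgroup.focalSubgroupOf_eq_closure_isConj {G : Type*} [Group G] (H : Subgroup G) :
    H.focalSubgroupOf = closure {g : H | ∃ x : H, IsConj (x : G) ↑(x * g)} := by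
  rw [focalSubgroupOf_eq_closure]
  congr 1
  ext g
  simp only [Set.mem_ofPred_eq, isConj_iff, commutatorElement_def, coe_mul]
  constructor
  · rintro ⟨x, hx, u, hg⟩
    exact ⟨⟨x⁻¹, inv_mem hx⟩, u, by rw [hg]; group⟩
  · rintro ⟨x, u, hu⟩
    have hg : (g : G) = (x : G)⁻¹ * (u * x * u⁻¹) := by rw [hu]; group
    exact ⟨(x : G)⁻¹, inv_mem x.2, u, by rw [hg]; group⟩

theorem Sylow.coe_mem_commutator_iff {G : Type*} [Group G] {p : ℕ} [Fact p.Prime]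
    (P : Sylow p G) [P.FiniteIndex] (x : P) :
    (x : G) ∈ commutator G ↔ x ∈ P.focalSubgroupOf := by
  rw [focalSubgroupOf_def, mem_subgroupOf, ← commutator_inf_eq_focalSubgroup, mem_inf]
  exact (and_iff_left x.2).symm

namespace IsFusionPreserving

variable {G₁ G₂ : Type*} [Group G₁] [Group G₂] {S₁ : Subgroup G₁} {S₂ : Subgroup G₂}
  {φ : S₁ ≃* S₂}

theorem isConj_iff_of_orderOf_eq (hφ : IsFusionPreserving S₁ S₂ φ) {x y : S₁}
    (hxy : orderOf x = orderOf y) :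
    IsConj (x : G₁) y ↔ IsConj (φ x : G₂) (φ y) := by
  have hP : zpowers (x : G₁) ≤ S₁ := zpowers_le.mpr x.2
  let α : zpowers (x : G₁) →* S₁ :=
    monoidHomOfForallMemZpowers mem_zpowers_mk_self (g' := y) (by simp [hxy])
  have hα : α ⟨x, mem_zpowers _⟩ = y := monoidHomOfForallMemZpowers_apply_gen _ _
  have realized₁ :=
    exists_forall_zpowers_conj_iff_isConj (S₁.subtype.comp α) (zpowers (x : G₁)).subtype
  have realized₂ := exists_forall_zpowers_conj_iff_isConj (S₂.subtype.comp (φ.toMonoidHom.comp α))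
    (S₂.subtype.comp (φ.toMonoidHom.comp (inclusion hP)))
  simp only [MonoidHom.comp_apply, hα] at realized₁ realized₂
  exact realized₁.symm.trans ((hφ _ _ hP le_rfl α).trans realized₂)

theorem isConj_iff (hφ : IsFusionPreserving S₁ S₂ φ) {x y : S₁} :
    IsConj (x : G₁) y ↔ IsConj (φ x : G₂) (φ y) := by
  constructor
  · intro h
    refine (hφ.isConj_iff_of_orderOf_eq ?_).mp h
    rw [← orderOf_coe, h.orderOf_eq, orderOf_coe]
  · intro h
    refine (hφ.isConj_iff_of_orderOf_eq ?_).mpr h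
    rw [← φ.orderOf_eq x, ← φ.orderOf_eq y, ← orderOf_coe, h.orderOf_eq, orderOf_coe]

theorem map_focalSubgroupOf (hφ : IsFusionPreserving S₁ S₂ φ) :
    S₁.focalSubgroupOf.map φ.toMonoidHom = S₂.focalSubgroupOf := by
  rw [focalSubgroupOf_eq_closure_isConj, focalSubgroupOf_eq_closure_isConj, MonoidHom.map_closure]
  congr 1
  ext g
  constructor
  · rintro ⟨g, ⟨x, hx⟩, rfl⟩
    exact ⟨φ x, by simpa using hφ.isConj_iff.mp hx⟩
  · rintro ⟨x, hx⟩
    refine ⟨φ.symm g, ⟨φ.symm x, ?_⟩, φ.apply_symm_apply g⟩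
    rw [hφ.isConj_iff]
    simpa using hx

end IsFusionPreserving

/-- A fusion preserving isomorphism `φ : S₁ ≃ S₂` between Sylow `p`-subgroups of finite
groups `G₁, G₂` carries `S₁ ∩ [G₁,G₁]` onto `S₂ ∩ [G₂,G₂]`. -/
theorem stmt18 (p : ℕ) [Fact p.Prime] (G₁ G₂ : Type) [Group G₁] [Finite G₁]
    [Group G₂] [Finite G₂] (S₁ : Sylow p G₁) (S₂ : Sylow p G₂)
    (φ : (S₁ : Subgroup G₁) ≃* (S₂ : Subgroup G₂))
    (hφ : IsFusionPreserving (S₁ : Subgroup G₁) (S₂ : Subgroup G₂) φ) :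
    ∀ x : (S₁ : Subgroup G₁),
      (x : G₁) ∈ commutator G₁ ↔ (φ x : G₂) ∈ commutator G₂ := by
  intro x
  rw [S₁.coe_mem_commutator_iff, S₂.coe_mem_commutator_iff, ← hφ.map_focalSubgroupOf,
    mem_map_equiv, φ.symm_apply_apply]
end
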